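/- Let G be a connected degree-Δ directed graph whose underlying undirected graph is bipartite with bipartition V = V₁ ∪ V₂. If the uniform distribution is a stationary distribution of the random walk on G, then |V₁| = |V₂|, all vertices of V₁ have the same out-degree k, and every vertex of V₂ has in-degree equal to k. -/

import Mathlib

open Finset

def outdeg {V : Type*} [Fintype V] (A : V → V → Prop) [DecidableRel A] (u : V) : ℕ :=
  (univ.filter (fun v => A u v)).card

def indeg {V : Type*} [Fintype V] (A : V → V → Prop) [DecidableRel A] (v : V) : ℕ :=
  (univ.filter (fun u => A u v)).card

/-!
The stationarity equation at `v` says that the harmonic mean of the out-degrees of the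
in-neighbours of `v` is `indeg v`. Summing the nonnegative defects
`(outdeg u - indeg v)² / outdeg u` over all edges `u → v` gives `∑ outdeg² - ∑ indeg²`, which
vanishes because `outdeg + indeg = Δ` and both degree sums count the edges. Hence
`outdeg u = indeg v` on every edge, so the function equal to `outdeg` on `V₁` and to `indeg`
on `V₂` is constant along edges, hence constant by connectivity. For `|V₁| = |V₂|`: the
stationary mass `|T|` entering a part `T` comes from vertices of the other part, each of
which sends out mass at most `1`.
-/

section

variable {V : Type*} (A : V → V → Prop) [DecidableRel A]

lemma sum_sum_filter_adj_comm {β : Type*} [AddCommMonoid β] (S T : Finset V) (g : V → V → β) :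
    ∑ v ∈ T, ∑ u ∈ S.filter (fun u => A u v), g u v
      = ∑ u ∈ S, ∑ v ∈ T.filter (fun v => A u v), g u v :=
  Finset.sum_comm' fun v u => by simp only [Finset.mem_filter]; tauto

variable [Fintype V]

def UniformIsStationary : Prop :=
  ∀ v : V, ∑ u ∈ univ.filter (fun u => A u v), (1 : ℝ) / (outdeg A u) = 1

lemma sum_outdeg_eq_sum_indeg : ∑ u, outdeg A u = ∑ v, indeg A v := by
  have := sum_sum_filter_adj_comm A univ univ fun _ _ => 1
  simp only [sum_const, smul_eq_mul, mul_one] at this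
  exact this.symm

variable {A}

lemma outdeg_pos_of_adj {u v : V} (h : A u v) : 0 < outdeg A u :=
  card_pos.mpr ⟨v, by simp [h]⟩

lemma card_le_card_of_uniformIsStationary (hstat : UniformIsStationary A) {S T : Finset V}
    (hST : ∀ u v, A u v → v ∈ T → u ∈ S) : T.card ≤ S.card := by
  have hin : ∀ v ∈ T, univ.filter (fun u => A u v) = S.filter (fun u => A u v) := fun v hv => by
    ext u; simp only [mem_filter, mem_univ, true_and]; exact ⟨fun h => ⟨hST u v h hv, h⟩, And.right⟩
  have hle : ∀ u, ∑ v ∈ T.filter (fun v => A u v), (1 : ℝ) / outdeg A u ≤ 1 := fun u => by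
    rw [sum_const, nsmul_eq_mul, mul_one_div]
    exact div_le_one_of_le₀
      (by exact_mod_cast card_le_card (filter_subset_filter _ (subset_univ T))) (Nat.cast_nonneg _)
  have : (T.card : ℝ) ≤ S.card := calc
    (T.card : ℝ) = ∑ v ∈ T, ∑ u ∈ S.filter (fun u => A u v), (1 : ℝ) / outdeg A u := by
      rw [card_eq_sum_ones, Nat.cast_sum]
      exact sum_congr rfl fun v hv => by rw [← hin v hv, hstat v, Nat.cast_one]
    _ = ∑ u ∈ S, ∑ v ∈ T.filter (fun v => A u v), (1 : ℝ) / outdeg A u :=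
      sum_sum_filter_adj_comm A S T _
    _ ≤ ∑ _u ∈ S, (1 : ℝ) := sum_le_sum fun u _ => hle u
    _ = S.card := by simp
  exact_mod_cast this

lemma sum_adj_sq_sub_div_eq (hstat : UniformIsStationary A) (v : V) :
    ∑ u ∈ univ.filter (fun u => A u v), ((outdeg A u : ℝ) - indeg A v) ^ 2 / outdeg A u
      = ∑ u ∈ univ.filter (fun u => A u v), (outdeg A u : ℝ) - (indeg A v : ℝ) ^ 2 := by
  have hterm : ∀ u ∈ univ.filter (fun u => A u v), ((outdeg A u : ℝ) - indeg A v) ^ 2 / outdeg A u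
      = outdeg A u - 2 * indeg A v + (indeg A v : ℝ) ^ 2 * (1 / outdeg A u) := fun u hu => by
    have : (outdeg A u : ℝ) ≠ 0 := by
      exact_mod_cast (outdeg_pos_of_adj (mem_filter.mp hu).2).ne'
    field_simp
    ring
  rw [sum_congr rfl hterm, sum_add_distrib, sum_sub_distrib, ← mul_sum, ← mul_sum, hstat v,
    sum_const]
  simp only [nsmul_eq_mul]
  rw [show ((univ.filter (fun u => A u v)).card : ℝ) = indeg A v from rfl]
  ring

lemma sum_sq_outdeg_eq_sum_sq_indeg {Δ : ℕ} (hreg : ∀ x : V, indeg A x + outdeg A x = Δ) :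
    ∑ u, (outdeg A u : ℝ) ^ 2 = ∑ v, (indeg A v : ℝ) ^ 2 := by
  have hdiff : ∀ x : V, (outdeg A x : ℝ) ^ 2 - (indeg A x : ℝ) ^ 2
      = Δ * ((outdeg A x : ℝ) - indeg A x) := fun x => by
    rw [← hreg x]; push_cast; ring
  have hsum : ∑ u, (outdeg A u : ℝ) = ∑ v, (indeg A v : ℝ) := by
    exact_mod_cast sum_outdeg_eq_sum_indeg A
  rw [← sub_eq_zero, ← sum_sub_distrib, sum_congr rfl fun x _ => hdiff x, ← mul_sum,
    sum_sub_distrib, hsum, sub_self, mul_zero]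

lemma outdeg_eq_indeg_of_adj {Δ : ℕ} (hreg : ∀ x : V, indeg A x + outdeg A x = Δ)
    (hstat : UniformIsStationary A) {u v : V} (h : A u v) : outdeg A u = indeg A v := by
  have hnonneg : ∀ v, ∀ u ∈ univ.filter (fun u => A u v),
      0 ≤ ((outdeg A u : ℝ) - indeg A v) ^ 2 / outdeg A u := fun _ _ _ => by positivity
  have htotal : ∑ v, ∑ u ∈ univ.filter (fun u => A u v),
      ((outdeg A u : ℝ) - indeg A v) ^ 2 / outdeg A u = 0 := calc
    _ = ∑ v, (∑ u ∈ univ.filter (fun u => A u v), (outdeg A u : ℝ) - (indeg A v : ℝ) ^ 2) :=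
      sum_congr rfl fun v _ => sum_adj_sq_sub_div_eq hstat v
    _ = ∑ u, (outdeg A u : ℝ) ^ 2 - ∑ v, (indeg A v : ℝ) ^ 2 := by
      rw [sum_sub_distrib, sum_sum_filter_adj_comm]
      simp only [sum_const, nsmul_eq_mul, sq]
      rfl
    _ = 0 := by rw [sum_sq_outdeg_eq_sum_sq_indeg hreg, sub_self]
  have hv := (sum_eq_zero_iff_of_nonneg fun v _ => sum_nonneg (hnonneg v)).1 htotal v (mem_univ v)
  have huv := (sum_eq_zero_iff_of_nonneg (hnonneg v)).1 hv u (by simp [h])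
  rcases div_eq_zero_iff.mp huv with hsq | hzero
  · exact_mod_cast sub_eq_zero.mp (pow_eq_zero_iff two_ne_zero |>.mp hsq)
  · exact absurd hzero (by exact_mod_cast (outdeg_pos_of_adj h).ne')

end

lemma Relation.exists_forall_eq_of_forall_reflTransGen {α β : Type*} [Nonempty β]
    {r : α → α → Prop} (hconn : ∀ x y, Relation.ReflTransGen r x y) {g : α → β}
    (hg : ∀ a b, r a b → g a = g b) : ∃ k, ∀ x, g x = k := by
  rcases isEmpty_or_nonempty α with hα | ⟨⟨x₀⟩⟩
  · exact ⟨Classical.arbitrary β, isEmptyElim⟩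
  · refine ⟨g x₀, fun x => ?_⟩
    induction hconn x₀ x with
    | refl => rfl
    | tail _ hbc ih => exact (hg _ _ hbc).symm.trans ih

theorem stmt9_general {V : Type*} [Fintype V] (A : V → V → Prop) [DecidableRel A]
    (Δ : ℕ)
    (hreg : ∀ x : V, indeg A x + outdeg A x = Δ)
    (V₁ V₂ : Finset V)
    (hcover : ∀ x : V, (x ∈ V₁ ∨ x ∈ V₂) ∧ ¬(x ∈ V₁ ∧ x ∈ V₂))
    (hbip : ∀ u v : V, A u v → (u ∈ V₁ ∧ v ∈ V₂) ∨ (u ∈ V₂ ∧ v ∈ V₁))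
    (hconn : ∀ x y : V, Relation.ReflTransGen (fun a b => A a b ∨ A b a) x y)
    (hstat : ∀ v : V, ∑ u ∈ univ.filter (fun u => A u v), (1 : ℝ) / (outdeg A u) = 1) :
    V₁.card = V₂.card ∧
      ∃ k : ℕ, (∀ x ∈ V₁, outdeg A x = k) ∧ (∀ y ∈ V₂, indeg A y = k) := by
  classical
  have hmem₂ : ∀ x, x ∈ V₂ ↔ x ∉ V₁ := fun x => by have := hcover x; tauto
  have hcard : V₁.card = V₂.card := le_antisymm
    (card_le_card_of_uniformIsStationary hstat fun u v h hv => by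
      have := hbip u v h; have := hmem₂ u; have := hmem₂ v; tauto)
    (card_le_card_of_uniformIsStationary hstat fun u v h hv => by
      have := hbip u v h; have := hmem₂ u; have := hmem₂ v; tauto)
  let g : V → ℕ := fun x => if x ∈ V₁ then outdeg A x else indeg A x
  have hedge : ∀ a b, A a b → g a = g b := fun a b h => by
    have hab := outdeg_eq_indeg_of_adj hreg hstat h
    have := hreg a
    have := hreg b
    rcases hbip a b h with ⟨ha, hb⟩ | ⟨ha, hb⟩
    · simp only [g, ha, (hmem₂ b).1 hb, if_true, if_false, hab]
    · simp only [g, (hmem₂ a).1 ha, hb, if_true, if_false]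
      omega
  obtain ⟨k, hk⟩ := Relation.exists_forall_eq_of_forall_reflTransGen hconn
    fun a b h => h.elim (hedge a b) fun h => (hedge b a h).symm
  exact ⟨hcard, k, fun x hx => by simpa [g, hx] using hk x,
    fun y hy => by simpa [g, (hmem₂ y).1 hy] using hk y⟩

/-- For a connected degree-Δ graph whose underlying undirected graph is bipartite with
parts `V₁`, `V₂`, if the uniform distribution is stationary then `|V₁| = |V₂|`, all
vertices of `V₁` have the same out-degree `k`, and every vertex of `V₂` has in-degree
`k`. -/
theorem stmt9 {V : Type*} [Fintype V] [DecidableEq V] (A : V → V → Prop) [DecidableRel A]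
    (Δ : ℕ) (hΔ : 0 < Δ)
    (hreg : ∀ x : V, indeg A x + outdeg A x = Δ)
    (V₁ V₂ : Finset V)
    (hcover : ∀ x : V, (x ∈ V₁ ∨ x ∈ V₂) ∧ ¬(x ∈ V₁ ∧ x ∈ V₂))
    (hbip : ∀ u v : V, A u v → (u ∈ V₁ ∧ v ∈ V₂) ∨ (u ∈ V₂ ∧ v ∈ V₁))
    (hconn : ∀ x y : V, Relation.ReflTransGen (fun a b => A a b ∨ A b a) x y)
    (hstat : ∀ v : V, ∑ u ∈ univ.filter (fun u => A u v), (1 : ℝ) / (outdeg A u) = 1) :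
    V₁.card = V₂.card ∧
      ∃ k : ℕ, (∀ x ∈ V₁, outdeg A x = k) ∧ (∀ y ∈ V₂, indeg A y = k) :=
  stmt9_general A Δ hreg V₁ V₂ hcover hbip hconn hstat
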